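/- arXiv:2403.02139 — 2 statements merged into one kernel-verified Lean document; each statement's English description precedes it below -/
import Mathlib

section
/- Let f(θ) = Σ_{|j| ≤ r} f̂_j e^{ijθ} be a d×d matrix-valued trigonometric polynomial with f(θ) Hermitian positive semidefinite for every θ, and suppose the Fourier coefficient f̂₀ = (1/2π) ∫₀^{2π} f(θ) dθ is Hermitian positive definite. For n ≥ 1 set A_n = C_n(f), D = I_n ⊗ f̂₀, and V_n = I_{dn} − ω D^{-1} A_n. If 0 < ω < 2 / ‖f̂₀^{-1/2} f f̂₀^{-1/2}‖_∞, then there exists a > 0, depending only on f and ω (independent of n), such that for every n the matrix A_n − a A_n² − V_n^H A_n V_n is positive semidefinite; equivalently, ‖V_n x‖_{A_n}² ≤ ‖x‖_{A_n}² − a ‖A_n x‖₂² for all x ∈ ℂ^{dn}. -/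
open Matrix
open scoped Kronecker ComplexOrder Matrix.Norms.L2Operator

/-- The square root of a positive semidefinite matrix (the definition `Matrix.PosSemidef.sqrt`
of the older Mathlib, which has since been removed). -/
noncomputable def Matrix.PosSemidef.sqrt {n 𝕜 : Type*} [Fintype n] [RCLike 𝕜] [DecidableEq n]
    {A : Matrix n n 𝕜} (hA : A.PosSemidef) : Matrix n n 𝕜 :=
  hA.1.eigenvectorUnitary.1 * diagonal ((↑) ∘ Real.sqrt ∘ hA.1.eigenvalues) *
    (star hA.1.eigenvectorUnitary : Matrix n n 𝕜)

/-- The grid points `θ_i^{(n)} = 2πi/n`. -/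
noncomputable def gridPt (n : ℕ) (i : Fin n) : ℝ := 2 * Real.pi * i / n

/-- The Fourier matrix `F_n` with entries `n^{-1/2} e^{2πi jk/n}`. -/
noncomputable def Fmat (n : ℕ) : Matrix (Fin n) (Fin n) ℂ :=
  Matrix.of fun j k : Fin n =>
    (((Real.sqrt n)⁻¹ : ℝ) : ℂ) *
      Complex.exp (2 * Real.pi * Complex.I * (j : ℕ) * (k : ℕ) / n)

/-- The block diagonal matrix with `d×d` diagonal blocks `g 0, …, g (n-1)`. -/
def blkDiag (n d : ℕ) (g : Fin n → Matrix (Fin d) (Fin d) ℂ) :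
    Matrix (Fin n × Fin d) (Fin n × Fin d) ℂ :=
  Matrix.of fun p q => if p.1 = q.1 then g p.1 p.2 q.2 else 0

/-- The `dn × dn` block circulant matrix generated by `f : ℝ → ℂ^{d×d}`. -/
noncomputable def Cblock (n d : ℕ) (f : ℝ → Matrix (Fin d) (Fin d) ℂ) :
    Matrix (Fin n × Fin d) (Fin n × Fin d) ℂ :=
  (Fmat n ⊗ₖ (1 : Matrix (Fin d) (Fin d) ℂ)) *
    blkDiag n d (fun i => f (gridPt n i)) *
    (Fmat n ⊗ₖ (1 : Matrix (Fin d) (Fin d) ℂ))ᴴ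

/-!
Conjugation by the unitary `F_n ⊗ I_d` turns `A_n = C_n(f)` into the block diagonal matrix of the
`f(θ_i)` and fixes `D = I_n ⊗ f̂₀`; being a ⋆-algebra homomorphism, it carries the block diagonal
matrix of the pointwise defects `B - aB² - VᴴBV` (with `B = f(θ_i)`, `V = 1 - ω f̂₀⁻¹ B`) to
`A_n - aA_n² - V_nᴴA_nV_n`. Writing `B = S m S` with `S = f̂₀^{1/2}`, the pointwise defect is
`S (2ω m² - ω² m³ - a m f̂₀ m) S`, which is nonnegative as soon as `a ‖f̂₀‖ + ω² ‖m‖ ≤ 2ω`, because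
`m³ ≤ ‖m‖ m²` and `m f̂₀ m ≤ ‖f̂₀‖ m²`. Since `ω sup_θ ‖m_θ‖ < 2`, one `a > 0` works for all `θ`
and `n`.
-/

lemma IsPrimitiveRoot.sum_pow_mul_inv_pow {K : Type*} [Field K] {n : ℕ} {ζ : K}
    (hζ : IsPrimitiveRoot ζ n) (j k : Fin n) :
    ∑ m : Fin n, ζ ^ ((j : ℕ) * (m : ℕ)) * (ζ ^ ((k : ℕ) * (m : ℕ)))⁻¹ =
      if j = k then (n : K) else 0 := by
  have hζ0 : ζ ≠ 0 := hζ.ne_zero (Fin.pos j).ne'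
  set z := ζ ^ ((j : ℤ) - k)
  have hterm (m : ℕ) : ζ ^ ((j : ℕ) * m) * (ζ ^ ((k : ℕ) * m))⁻¹ = z ^ m := by
    rw [← zpow_natCast, ← zpow_natCast, ← _root_.zpow_neg, ← zpow_add₀ hζ0, ← zpow_natCast,
      ← _root_.zpow_mul]
    push_cast
    ring_nf
  simp only [hterm, Fin.sum_univ_eq_sum_range (fun m => z ^ m)]
  split_ifs with hjk
  · simp [z, hjk]
  · have hz1 : z ≠ 1 := by
      rw [Ne, hζ.zpow_eq_one_iff_dvd]
      intro hdvd
      have := Int.eq_zero_of_abs_lt_dvd hdvd (by rw [abs_lt]; omega)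
      exact hjk (Fin.ext (by omega))
    have hzn : z ^ n = 1 := by
      rw [← zpow_natCast, ← _root_.zpow_mul, mul_comm, _root_.zpow_mul, zpow_natCast,
        hζ.pow_eq_one, _root_.one_zpow]
    rw [geom_sum_eq hz1, hzn, sub_self, zero_div]

open Complex in
lemma Fmat_apply_eq_pow (n : ℕ) (j k : Fin n) :
    Fmat n j k = ((Real.sqrt n)⁻¹ : ℂ) * exp (2 * Real.pi * I / n) ^ ((j : ℕ) * (k : ℕ)) := by
  rw [Fmat, of_apply, ← exp_nat_mul]
  push_cast
  ring_nf

open Complex in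
lemma Fmat_mul_conjTranspose (n : ℕ) : Fmat n * (Fmat n)ᴴ = 1 := by
  ext j k
  have hn : n ≠ 0 := (Fin.pos j).ne'
  set ζ := exp (2 * Real.pi * I / n)
  have hζ : IsPrimitiveRoot ζ n := isPrimitiveRoot_exp n hn
  have hstar (m : ℕ) : star (ζ ^ m) = (ζ ^ m)⁻¹ := by
    rw [inv_eq_conj (by rw [norm_pow, hζ.norm'_eq_one hn, one_pow])]
    rfl
  have hscale : ((Real.sqrt n)⁻¹ : ℂ) * star ((Real.sqrt n)⁻¹ : ℂ) = (n : ℂ)⁻¹ := by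
    rw [← ofReal_inv, Complex.star_def, conj_ofReal, ← ofReal_mul, ← mul_inv,
      Real.mul_self_sqrt n.cast_nonneg, ofReal_inv, ofReal_natCast]
  have hterm (m : Fin n) : Fmat n j m * star (Fmat n k m) =
      (n : ℂ)⁻¹ * (ζ ^ ((j : ℕ) * (m : ℕ)) * (ζ ^ ((k : ℕ) * (m : ℕ)))⁻¹) := by
    rw [Fmat_apply_eq_pow, Fmat_apply_eq_pow, star_mul', hstar, ← hscale]
    ring
  simp only [mul_apply, conjTranspose_apply, hterm, ← Finset.mul_sum, hζ.sum_pow_mul_inv_pow,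
    one_apply]
  split_ifs <;> simp [hn]

noncomputable def blkDiagStarAlgHom (n d : ℕ) :
    (Fin n → Matrix (Fin d) (Fin d) ℂ) →⋆ₐ[ℂ] Matrix (Fin n × Fin d) (Fin n × Fin d) ℂ where
  toFun := blkDiag n d
  map_one' := by
    ext ⟨i, p⟩ ⟨j, q⟩
    by_cases hij : i = j <;> simp [blkDiag, one_apply, hij]
  map_mul' g h := by
    ext ⟨i, p⟩ ⟨j, q⟩
    simp only [blkDiag, mul_apply, of_apply, Fintype.sum_prod_type, ite_mul, zero_mul,
      Pi.mul_apply]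
    split_ifs with hij <;> simp [hij, Finset.sum_ite_eq]
  map_zero' := by
    ext ⟨i, p⟩ ⟨j, q⟩
    simp [blkDiag]
  map_add' g h := by
    ext ⟨i, p⟩ ⟨j, q⟩
    simp only [blkDiag, of_apply, Pi.add_apply, Matrix.add_apply]
    split_ifs <;> simp
  commutes' c := by
    ext ⟨i, p⟩ ⟨j, q⟩
    by_cases hij : i = j <;> simp [blkDiag, algebraMap_matrix_apply, hij]
  map_star' g := by
    ext ⟨i, p⟩ ⟨j, q⟩
    simp only [blkDiag, of_apply, star_apply, Pi.star_apply]
    by_cases hij : i = j <;> simp [hij, eq_comm]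

noncomputable def fourierBlockUnitary (n d : ℕ) :
    unitary (Matrix (Fin n × Fin d) (Fin n × Fin d) ℂ) :=
  ⟨Fmat n ⊗ₖ 1,
    kronecker_mem_unitary (mem_unitaryGroup_iff.mpr (Fmat_mul_conjTranspose n)) (one_mem _)⟩

noncomputable def blockCirculant (n d : ℕ) :
    (Fin n → Matrix (Fin d) (Fin d) ℂ) →⋆ₐ[ℂ] Matrix (Fin n × Fin d) (Fin n × Fin d) ℂ :=
  (Unitary.conjStarAlgAut ℂ _ (fourierBlockUnitary n d)).toStarAlgHom.comp (blkDiagStarAlgHom n d)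

lemma Cblock_eq_blockCirculant (n d : ℕ) (f : ℝ → Matrix (Fin d) (Fin d) ℂ) :
    Cblock n d f = blockCirculant n d (fun i => f (gridPt n i)) :=
  rfl

lemma blkDiag_const (n d : ℕ) (M : Matrix (Fin d) (Fin d) ℂ) :
    blkDiag n d (fun _ => M) = 1 ⊗ₖ M := by
  ext ⟨i, p⟩ ⟨j, q⟩
  by_cases hij : i = j <;> simp [blkDiag, one_apply, hij]

lemma blockCirculant_const (n d : ℕ) (M : Matrix (Fin d) (Fin d) ℂ) :
    blockCirculant n d (fun _ => M) = blkDiag n d (fun _ => M) := by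
  rw [blkDiag_const]
  change (Fmat n ⊗ₖ 1) * blkDiag n d (fun _ => M) * star (Fmat n ⊗ₖ 1) = _
  rw [blkDiag_const, star_eq_conjTranspose, conjTranspose_kronecker, conjTranspose_one,
    ← mul_kronecker_mul, ← mul_kronecker_mul, mul_one, Fmat_mul_conjTranspose, one_mul, mul_one]

open scoped MatrixOrder

section Sqrt

variable {ι : Type*} [Fintype ι] [DecidableEq ι] {N : Matrix ι ι ℂ}

lemma Matrix.PosSemidef.sqrt_eq_cfcSqrt (hN : N.PosSemidef) : hN.sqrt = CFC.sqrt N := by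
  rw [CFC.sqrt_eq_real_sqrt N hN.nonneg, cfcₙ_eq_cfc, hN.1.cfc_eq]
  rfl

lemma Matrix.PosSemidef.sqrt_mul_sqrt (hN : N.PosSemidef) : hN.sqrt * hN.sqrt = N := by
  rw [hN.sqrt_eq_cfcSqrt]
  exact CFC.sqrt_mul_sqrt_self N hN.nonneg

lemma Matrix.PosSemidef.isSelfAdjoint_sqrt (hN : N.PosSemidef) : IsSelfAdjoint hN.sqrt := by
  rw [hN.sqrt_eq_cfcSqrt]
  exact (CFC.sqrt_nonneg N).isSelfAdjoint

end Sqrt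

lemma smoothing_nonneg_of_isSelfAdjoint {A : Type*} [CStarAlgebra A] [PartialOrder A]
    [StarOrderedRing A] {m p : A} (hm : IsSelfAdjoint m) (hp : IsSelfAdjoint p) {ω a : ℝ}
    (ha : 0 ≤ a) (h : a * ‖p‖ + ω ^ 2 * ‖m‖ ≤ 2 * ω) :
    0 ≤ m - a • (m * p * m) - (1 - ω • m) * m * (1 - ω • m) := by
  have hm_le : 0 ≤ algebraMap ℝ A ‖m‖ - m := sub_nonneg.mpr hm.le_algebraMap_norm_self
  have hp_le : 0 ≤ algebraMap ℝ A ‖p‖ - p := sub_nonneg.mpr hp.le_algebraMap_norm_self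
  have hsum : m - a • (m * p * m) - (1 - ω • m) * m * (1 - ω • m) =
      ω ^ 2 • (m * (algebraMap ℝ A ‖m‖ - m) * m) + a • (m * (algebraMap ℝ A ‖p‖ - p) * m) +
        (2 * ω - ω ^ 2 * ‖m‖ - a * ‖p‖) • (m * m) := by
    simp only [Algebra.algebraMap_eq_smul_one, mul_sub, sub_mul, mul_smul_comm, smul_mul_assoc,
      mul_one, one_mul, smul_sub, sub_smul, smul_smul]
    module
  rw [hsum]
  refine add_nonneg (add_nonneg ?_ ?_) ?_
  · exact smul_nonneg (sq_nonneg ω) (hm.conjugate_nonneg hm_le)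
  · exact smul_nonneg ha (hm.conjugate_nonneg hp_le)
  · exact smul_nonneg (by linarith) hm.mul_self_nonneg

/-- `smoothingDefect ω a D⁻¹ A = A - a A² - Vᴴ A V` for the relaxed Jacobi iteration matrix
`V = 1 - ω D⁻¹ A`. -/
noncomputable def smoothingDefect {R : Type*} [Ring R] [StarRing R] [Algebra ℂ R] (ω a : ℝ)
    (dinv x : R) : R :=
  x - (a : ℂ) • (x * x) - star (1 - (ω : ℂ) • (dinv * x)) * x * (1 - (ω : ℂ) • (dinv * x))

lemma map_smoothingDefect {R S : Type*} [Ring R] [StarRing R] [Algebra ℂ R] [Ring S]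
    [StarRing S] [Algebra ℂ S] (φ : R →⋆ₐ[ℂ] S) (ω a : ℝ) (dinv x : R) :
    φ (smoothingDefect ω a dinv x) = smoothingDefect ω a (φ dinv) (φ x) := by
  simp only [smoothingDefect, map_sub, map_mul, map_smul, map_star, map_one]

lemma smoothingDefect_nonneg {ι : Type*} [Fintype ι] [DecidableEq ι] {N B : Matrix ι ι ℂ}
    (hN : N.PosDef) (hB : B.IsHermitian) {ω a : ℝ} (ha : 0 ≤ a)
    (h : a * ‖N‖ + ω ^ 2 * ‖(hN.posSemidef.sqrt)⁻¹ * B * (hN.posSemidef.sqrt)⁻¹‖ ≤ 2 * ω) :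
    0 ≤ smoothingDefect ω a N⁻¹ B := by
  have hSS := hN.posSemidef.sqrt_mul_sqrt
  have hS := hN.posSemidef.isSelfAdjoint_sqrt
  set S := hN.posSemidef.sqrt
  have hSdet : IsUnit S.det := by
    have hNdet : IsUnit N.det := isUnit_iff_ne_zero.mpr hN.det_pos.ne'
    rw [← hSS, det_mul] at hNdet
    exact isUnit_of_mul_isUnit_left hNdet
  set T := S⁻¹
  have hT : IsSelfAdjoint T := IsHermitian.inv hS
  have hTS : T * S = 1 := nonsing_inv_mul S hSdet
  have hTS' (x : Matrix ι ι ℂ) : T * (S * x) = x := by rw [← mul_assoc, hTS, one_mul]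
  have hST' (x : Matrix ι ι ℂ) : S * (T * x) = x := by
    rw [← mul_assoc, mul_nonsing_inv S hSdet, one_mul]
  have hNinv : N⁻¹ = T * T := by rw [← hSS, Matrix.mul_inv_rev]
  set m := T * B * T
  have hm : IsSelfAdjoint m := hB.isSelfAdjoint.conjugate_self hT
  have hB' : B = S * m * S := by
    rw [← mul_assoc, ← mul_assoc, mul_nonsing_inv S hSdet, one_mul, mul_assoc, hTS, mul_one]
  have hV : 1 - (ω : ℂ) • (N⁻¹ * B) = T * (1 - ω • m) * S := by
    rw [hNinv, hB']
    simp only [mul_sub, sub_mul, mul_one, hTS, mul_smul_comm, smul_mul_assoc, mul_assoc, hTS',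
      Complex.coe_smul]
  have hVstar : star (T * (1 - ω • m) * S) = S * (1 - ω • m) * T := by
    simp only [star_mul, star_sub, star_one, star_smul, star_trivial, hS.star_eq, hT.star_eq,
      hm.star_eq, mul_assoc]
  have hdefect : smoothingDefect ω a N⁻¹ B =
      S * (m - a • (m * N * m) - (1 - ω • m) * m * (1 - ω • m)) * S := by
    rw [smoothingDefect, hV, hVstar, ← hSS, hB']
    simp only [mul_sub, sub_mul, one_mul, mul_assoc, hTS', hST', Complex.coe_smul, mul_smul_comm,
      smul_mul_assoc]
  rw [hdefect]
  exact hS.conjugate_nonneg (smoothing_nonneg_of_isSelfAdjoint hm hN.isHermitian ha h)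

lemma iSup_pos_and_bddAbove_of_lt_two_div {α : Type*} {g : α → ℝ} {ω : ℝ} (hω0 : 0 < ω)
    (hω : ω < 2 / ⨆ x, g x) : 0 < ⨆ x, g x ∧ BddAbove (Set.range g) := by
  have hpos : 0 < ⨆ x, g x := by
    by_contra! hle
    linarith [div_nonpos_of_nonneg_of_nonpos zero_le_two hle]
  refine ⟨hpos, ?_⟩
  -- the supremum of a family of reals that is unbounded above is `0` by convention
  by_contra hbdd
  rw [Real.iSup_of_not_bddAbove hbdd] at hpos
  exact hpos.false

theorem stmt4_general {d : ℕ} (fhat : ℤ → Matrix (Fin d) (Fin d) ℂ)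
    (f : ℝ → Matrix (Fin d) (Fin d) ℂ)
    (hpsd : ∀ θ, (f θ).PosSemidef)
    (hf0 : (fhat 0).PosDef)
    (ω : ℝ) (hω0 : 0 < ω)
    (hω2 : ω < 2 / ⨆ θ : ℝ,
      ‖(Matrix.PosSemidef.sqrt hf0.posSemidef)⁻¹ * f θ * (Matrix.PosSemidef.sqrt hf0.posSemidef)⁻¹‖) :
    ∃ a : ℝ, 0 < a ∧ ∀ n : ℕ,
      (Cblock n d f - (a : ℂ) • (Cblock n d f * Cblock n d f) -
        (1 - (ω : ℂ) • ((blkDiag n d fun _ => fhat 0)⁻¹ * Cblock n d f))ᴴ *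
          Cblock n d f *
        (1 - (ω : ℂ) • ((blkDiag n d fun _ => fhat 0)⁻¹ * Cblock n d f))).PosSemidef := by
  set T := (Matrix.PosSemidef.sqrt hf0.posSemidef)⁻¹
  set c := ⨆ θ : ℝ, ‖T * f θ * T‖
  obtain ⟨hc, hbdd⟩ := iSup_pos_and_bddAbove_of_lt_two_div hω0 hω2
  have hωc : ω * c < 2 := (lt_div_iff₀ hc).mp hω2
  set a := (2 * ω - ω ^ 2 * c) / (‖fhat 0‖ + 1)
  have ha : 0 < a := div_pos (by nlinarith) (by positivity)
  have hbound (θ : ℝ) : a * ‖fhat 0‖ + ω ^ 2 * ‖T * f θ * T‖ ≤ 2 * ω := by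
    have h1 : a * ‖fhat 0‖ ≤ 2 * ω - ω ^ 2 * c := by
      rw [← div_mul_cancel₀ (2 * ω - ω ^ 2 * c) (by positivity : ‖fhat 0‖ + 1 ≠ 0)]
      exact mul_le_mul_of_nonneg_left (by linarith) ha.le
    nlinarith [le_ciSup hbdd θ, sq_nonneg ω]
  refine ⟨a, ha, fun n => nonneg_iff_posSemidef.mp ?_⟩
  have hDinv : (blkDiag n d fun _ => fhat 0)⁻¹ = blockCirculant n d (fun _ => (fhat 0)⁻¹) := by
    rw [← blockCirculant_const]
    refine inv_eq_right_inv ?_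
    rw [← map_mul, ← map_one (blockCirculant n d)]
    exact congrArg _ (funext fun _ => mul_nonsing_inv _ (isUnit_iff_ne_zero.mpr hf0.det_pos.ne'))
  change 0 ≤ smoothingDefect ω a (blkDiag n d fun _ => fhat 0)⁻¹ (Cblock n d f)
  rw [hDinv, Cblock_eq_blockCirculant, ← map_smoothingDefect]
  exact map_nonneg _ fun i => smoothingDefect_nonneg hf0 (hpsd _).1 ha.le (hbound _)

/-- Smoothing property of the relaxed block Jacobi method for block circulant
matrices: for admissible relaxation `ω` there is an `n`-independent `a > 0`
making `A_n - a A_n² - V_nᴴ A_n V_n` positive semidefinite for every `n`. -/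
theorem stmt4 {d : ℕ} (r : ℕ) (fhat : ℤ → Matrix (Fin d) (Fin d) ℂ)
    (f : ℝ → Matrix (Fin d) (Fin d) ℂ)
    (hfdef : ∀ θ : ℝ, f θ =
      ∑ j ∈ Finset.Icc (-(r : ℤ)) (r : ℤ),
        Complex.exp (Complex.I * (j : ℂ) * (θ : ℂ)) • fhat j)
    (hpsd : ∀ θ, (f θ).PosSemidef)
    (hf0 : (fhat 0).PosDef)
    (ω : ℝ) (hω0 : 0 < ω)
    (hω2 : ω < 2 / ⨆ θ : ℝ,
      ‖(Matrix.PosSemidef.sqrt hf0.posSemidef)⁻¹ * f θ * (Matrix.PosSemidef.sqrt hf0.posSemidef)⁻¹‖) :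
    ∃ a : ℝ, 0 < a ∧ ∀ n : ℕ,
      (Cblock n d f - (a : ℂ) • (Cblock n d f * Cblock n d f) -
        (1 - (ω : ℂ) • ((blkDiag n d fun _ => fhat 0)⁻¹ * Cblock n d f))ᴴ *
          Cblock n d f *
        (1 - (ω : ℂ) • ((blkDiag n d fun _ => fhat 0)⁻¹ * Cblock n d f))).PosSemidef :=
  stmt4_general fhat f hpsd hf0 ω hω0 hω2
end

section
/- Let D ∈ ℂ^{n×n} be Hermitian positive definite, let A ∈ ℂ^{n×n} be Hermitian positive semidefinite, let ω ∈ ℝ, let a > 0, and set V = I_n − ω D^{-1} A. If the matrix 2ω D^{-1} − ω² D^{-1} A D^{-1} − a I_n is positive semidefinite, then the matrix A − a A² − V^H A V is positive semidefinite. -/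
open Matrix
open scoped ComplexOrder

namespace Matrix

variable {ι R : Type*} [Fintype ι] [DecidableEq ι] [CommRing R] [StarRing R]

theorem sub_smul_mul_self_sub_conjTranspose_mul_mul_eq {A B : Matrix ι ι R}
    (hA : A.IsHermitian) (hB : B.IsHermitian) {ω : R} (hω : IsSelfAdjoint ω) (a : R) :
    A - a • (A * A) - (1 - ω • (B * A))ᴴ * A * (1 - ω • (B * A)) =
      A * ((2 * ω) • B - ω ^ 2 • (B * A * B) - a • 1) * A := by
  simp only [conjTranspose_sub, conjTranspose_one, conjTranspose_smul, conjTranspose_mul,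
    hA.eq, hB.eq, hω.star_eq]
  noncomm_ring
  match_scalars <;> ring

end Matrix

theorem stmt5_general {n : ℕ} (D A : Matrix (Fin n) (Fin n) ℂ)
    (hD : D.PosDef) (hA : A.PosSemidef) (ω a : ℝ)
    (h : (((2 * ω : ℝ) : ℂ) • D⁻¹ - ((ω ^ 2 : ℝ) : ℂ) • (D⁻¹ * A * D⁻¹) -
      (a : ℂ) • (1 : Matrix (Fin n) (Fin n) ℂ)).PosSemidef) :
    (A - (a : ℂ) • (A * A) -
      (1 - (ω : ℂ) • (D⁻¹ * A))ᴴ * A * (1 - (ω : ℂ) • (D⁻¹ * A))).PosSemidef := by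
  rw [sub_smul_mul_self_sub_conjTranspose_mul_mul_eq hA.isHermitian hD.isHermitian.inv
    (Complex.conj_ofReal ω)]
  push_cast at h
  simpa only [hA.isHermitian.eq] using h.conjTranspose_mul_mul_same A

/-- If `2ω D⁻¹ - ω² D⁻¹ A D⁻¹ - a·I` is PSD (with `D` HPD, `A` HPSD, `a > 0`),
then `A - a A² - Vᴴ A V` is PSD, where `V = I - ω D⁻¹ A`. -/
theorem stmt5 {n : ℕ} (D A : Matrix (Fin n) (Fin n) ℂ)
    (hD : D.PosDef) (hA : A.PosSemidef) (ω a : ℝ) (ha : 0 < a)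
    (h : (((2 * ω : ℝ) : ℂ) • D⁻¹ - ((ω ^ 2 : ℝ) : ℂ) • (D⁻¹ * A * D⁻¹) -
      (a : ℂ) • (1 : Matrix (Fin n) (Fin n) ℂ)).PosSemidef) :
    (A - (a : ℂ) • (A * A) -
      (1 - (ω : ℂ) • (D⁻¹ * A))ᴴ * A * (1 - (ω : ℂ) • (D⁻¹ * A))).PosSemidef :=
  stmt5_general D A hD hA ω a h
end
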